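/- arXiv:1705.00210 — 2 statements merged into one kernel-verified Lean document; each statement's English description precedes it below -/
import Mathlib

section
/- For every γ > 0 there exists a constant C > 0 (depending only on γ) such that for all integers n ≥ 2 and integers N ≥ n^n with γ·n·vol_n(D_n) < N·vol_{n-1}(D_{n-1}), setting t_{n,N} = √(1 − (γ·n·vol_n(D_n)/(N·vol_{n-1}(D_{n-1})))^{2/(n-1)}) and α_{n,r} = α_{n,r,t_{n,N}}: for all r ≥ n², α_{n,r} ≥ 1 − C·√n / r. -/
open MeasureTheory Metric Filter Set
open scoped ENNReal NNReal Topology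

noncomputable section

/-- The closed unit Euclidean ball `D_n` in `ℝ^n`. -/
def unitBall (n : ℕ) : Set (EuclideanSpace ℝ (Fin n)) := Metric.closedBall 0 1

/-- The volume of the unit ball in `ℝ^n`, as a real number. -/
def ballVol (n : ℕ) : ℝ := (volume (unitBall n)).toReal

/-- The uniform (rotation invariant) probability measure on the unit sphere `S^{n-1}`:
the normalized `(n-1)`-dimensional Hausdorff measure restricted to the sphere. -/
def sphereUniform (n : ℕ) : Measure (EuclideanSpace ℝ (Fin n)) :=
  (μH[(n : ℝ) - 1] (Metric.sphere (0 : EuclideanSpace ℝ (Fin n)) 1))⁻¹ •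
    (μH[(n : ℝ) - 1]).restrict (Metric.sphere (0 : EuclideanSpace ℝ (Fin n)) 1)

/-- `capProb n r t` is the probability that a uniform random point `y` of the unit sphere
`S^{n-1}` satisfies `⟨x, y⟩ ≥ t`, for a fixed `x` with `‖x‖ = r`, given by the explicit
cap-plus-cone formula. -/
def capProb (n : ℕ) (r t : ℝ) : ℝ :=
  if r < t then 0
  else (2 * ballVol (n - 1) / ballVol n) *
    ((∫ s in (t / r)..1, (1 - s ^ 2) ^ (((n : ℝ) - 1) / 2)) +
      (t / (n * r)) * (1 - t ^ 2 / r ^ 2) ^ (((n : ℝ) - 1) / 2))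

/-- The width `t_{n,N}` of the slabs used in the random construction; here the surface
area of `D_n` is `n · vol_n(D_n)`. -/
def tWidth (γ : ℝ) (n N : ℕ) : ℝ :=
  Real.sqrt (1 - (γ * n * ballVol n / (N * ballVol (n - 1))) ^ (2 / ((n : ℝ) - 1)))

/-! With `K = 2 vol_{n-1}(D_{n-1}) / vol_n(D_n)`, the function `K (1 - s²)^{(n-1)/2}` is a
probability density on `[0, 1]` (slice `D_n` orthogonally to a unit vector; equivalently,
substitute `s = sin θ` and compare with the Gamma-function formulas for the volumes).
Dropping the nonnegative cone term, `1 - α_{n,r,t} ≤ K ∫_0^{t/r} (1 - s²)^{(n-1)/2} ds ≤ K t / r`. The integrand is at least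
`1/2` on `[0, 1/√n]`, so `K ≤ 2√n`, and `t_{n,N} ≤ 1`; hence `C = 2` works. -/

open Real intervalIntegral

theorem integral_cos_pow_zero_pi_div_two (n : ℕ) :
    ∫ x in (0 : ℝ)..π / 2, cos x ^ n =
      √π * Gamma (((n : ℝ) + 1) / 2) / (2 * Gamma ((n : ℝ) / 2 + 1)) := by
  induction n using Nat.twoStepInduction with
  | zero =>
    norm_num [Gamma_one_half_eq, mul_self_sqrt pi_pos.le]
  | one =>
    have h : Gamma (3 / 2) = 1 / 2 * √π := by
      rw [show (3 / 2 : ℝ) = 1 / 2 + 1 by norm_num, Gamma_add_one (by norm_num), Gamma_one_half_eq]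
    norm_num [h]
    field_simp
  | more n ih _ =>
    have hn₁ : Gamma (((n : ℝ) + 1) / 2 + 1) = ((n + 1) / 2) * Gamma (((n : ℝ) + 1) / 2) :=
      Gamma_add_one (by positivity)
    have hn₂ : Gamma ((n : ℝ) / 2 + 1 + 1) = ((n : ℝ) / 2 + 1) * Gamma ((n : ℝ) / 2 + 1) :=
      Gamma_add_one (by positivity)
    rw [integral_cos_pow, cos_pi_div_two, sin_zero, zero_pow n.succ_ne_zero, zero_mul, mul_zero,
      sub_zero, zero_div, zero_add, ih]
    push_cast
    rw [show ((n : ℝ) + 2 + 1) / 2 = ((n : ℝ) + 1) / 2 + 1 by ring,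
      show ((n : ℝ) + 2) / 2 + 1 = (n : ℝ) / 2 + 1 + 1 by ring, hn₁, hn₂]
    field_simp

theorem continuous_one_sub_sq_rpow {c : ℝ} (hc : 0 ≤ c) :
    Continuous fun s : ℝ => (1 - s ^ 2) ^ c :=
  (continuous_rpow_const hc).comp (by fun_prop)

theorem integral_one_sub_sq_rpow_eq_integral_cos_pow {n : ℕ} (hn : 1 ≤ n) :
    ∫ s in (0 : ℝ)..1, (1 - s ^ 2) ^ (((n : ℝ) - 1) / 2) = ∫ x in (0 : ℝ)..π / 2, cos x ^ n := by
  have hc : (0 : ℝ) ≤ ((n : ℝ) - 1) / 2 := by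
    have : (1 : ℝ) ≤ n := by exact_mod_cast hn
    linarith
  have hsub := integral_comp_mul_deriv (a := 0) (b := π / 2) (fun x _ => hasDerivAt_sin x)
    continuous_cos.continuousOn (continuous_one_sub_sq_rpow hc)
  rw [sin_zero, sin_pi_div_two] at hsub
  rw [← hsub]
  refine integral_congr fun x hx => ?_
  rw [Set.uIcc_of_le (by positivity)] at hx
  have hcos : 0 ≤ cos x := cos_nonneg_of_mem_Icc ⟨by linarith [hx.1, pi_pos], hx.2⟩
  obtain ⟨m, rfl⟩ := Nat.exists_eq_add_of_le' hn
  have hexp : ((2 : ℕ) : ℝ) * ((((m + 1 : ℕ) : ℝ) - 1) / 2) = m := by push_cast; ring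
  rw [Function.comp_apply, ← cos_sq', ← rpow_natCast (cos x) 2, ← rpow_mul hcos, hexp,
    rpow_natCast, pow_succ]

theorem ballVol_eq {m : ℕ} (hm : 1 ≤ m) : ballVol m = √π ^ m / Gamma ((m : ℝ) / 2 + 1) := by
  have : Nonempty (Fin m) := ⟨⟨0, hm⟩⟩
  have hΓ : 0 < Gamma ((m : ℝ) / 2 + 1) := Gamma_pos_of_pos (by positivity)
  rw [ballVol, unitBall, EuclideanSpace.volume_closedBall, Fintype.card_fin, ENNReal.ofReal_one,
    one_pow, one_mul, ENNReal.toReal_ofReal (by positivity)]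

theorem ballVol_pos {m : ℕ} (hm : 1 ≤ m) : 0 < ballVol m := by
  have hΓ : 0 < Gamma ((m : ℝ) / 2 + 1) := Gamma_pos_of_pos (by positivity)
  rw [ballVol_eq hm]
  positivity

theorem ballVol_pred_div_mul_integral_eq_one {n : ℕ} (hn : 2 ≤ n) :
    2 * ballVol (n - 1) / ballVol n *
      ∫ s in (0 : ℝ)..1, (1 - s ^ 2) ^ (((n : ℝ) - 1) / 2) = 1 := by
  obtain ⟨m, rfl⟩ := Nat.exists_eq_add_of_le' (by omega : 1 ≤ n)
  have hm : 1 ≤ m := by omega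
  rw [integral_one_sub_sq_rpow_eq_integral_cos_pow (by omega), integral_cos_pow_zero_pi_div_two,
    Nat.add_sub_cancel, ballVol_eq hm, ballVol_eq (by omega)]
  push_cast
  rw [show ((m : ℝ) + 1 + 1) / 2 = (m : ℝ) / 2 + 1 by ring, pow_succ]
  field_simp

theorem half_le_one_sub_inv_rpow {x : ℝ} (hx : 1 < x) : 1 / 2 ≤ (1 - x⁻¹) ^ ((x - 1) / 2) := by
  have hx₁ : 0 < x - 1 := sub_pos.mpr hx
  have hbase : 0 < 1 - x⁻¹ := sub_pos.mpr (inv_lt_one_of_one_lt₀ hx)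
  have hlog : -1 / (x - 1) ≤ log (1 - x⁻¹) := by
    convert one_sub_inv_le_log_of_pos hbase using 1
    field_simp
    ring
  calc (1 : ℝ) / 2 ≤ -(1 / 2) + 1 := by norm_num
    _ ≤ exp (-(1 / 2)) := add_one_le_exp _
    _ = exp (-1 / (x - 1) * ((x - 1) / 2)) := by congr 1; field_simp
    _ ≤ (1 - x⁻¹) ^ ((x - 1) / 2) := by
      rw [rpow_def_of_pos hbase]
      gcongr

theorem integral_one_sub_sq_rpow_le {c u : ℝ} (hc : 0 ≤ c) (hu₀ : 0 ≤ u) (hu₁ : u ≤ 1) :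
    ∫ s in (0 : ℝ)..u, (1 - s ^ 2) ^ c ≤ u := by
  have h := integral_mono_on hu₀ ((continuous_one_sub_sq_rpow hc).intervalIntegrable 0 u)
    (intervalIntegrable_const (μ := volume)) fun s (hs : s ∈ Set.Icc 0 u) =>
      rpow_le_one (by nlinarith [hs.1, hs.2]) (by nlinarith [hs.1]) hc
  simpa using h

theorem one_div_two_sqrt_le_integral_one_sub_sq_rpow {x : ℝ} (hx : 1 < x) :
    1 / (2 * √x) ≤ ∫ s in (0 : ℝ)..1, (1 - s ^ 2) ^ ((x - 1) / 2) := by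
  have hc : 0 ≤ (x - 1) / 2 := by linarith
  have hf := continuous_one_sub_sq_rpow hc
  set a := 1 / √x
  have ha₀ : 0 < a := by positivity
  have ha₁ : a ≤ 1 := by
    rw [div_le_one (by positivity), one_le_sqrt]
    exact hx.le
  have ha₂ : a ^ 2 = x⁻¹ := by
    rw [div_pow, one_pow, sq_sqrt (by linarith), one_div]
  have hhead : a * (1 / 2) ≤ ∫ s in (0 : ℝ)..a, (1 - s ^ 2) ^ ((x - 1) / 2) := by
    have h := integral_mono_on ha₀.le (intervalIntegrable_const (μ := volume))
      (hf.intervalIntegrable 0 a)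
      fun s (hs : s ∈ Set.Icc 0 a) =>
        (half_le_one_sub_inv_rpow hx).trans
          (rpow_le_rpow (sub_pos.mpr (inv_lt_one_of_one_lt₀ hx)).le
            (by nlinarith [hs.1, hs.2]) hc)
    simpa using h
  have htail : 0 ≤ ∫ s in a..1, (1 - s ^ 2) ^ ((x - 1) / 2) :=
    integral_nonneg ha₁ fun s hs =>
      rpow_nonneg (by nlinarith [ha₀.le.trans hs.1, hs.2]) _
  rw [← integral_add_adjacent_intervals (hf.intervalIntegrable 0 a) (hf.intervalIntegrable a 1)]
  calc 1 / (2 * √x) = a * (1 / 2) := by ring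
    _ ≤ _ := by linarith

theorem ballVol_pred_div_le {n : ℕ} (hn : 2 ≤ n) : 2 * ballVol (n - 1) / ballVol n ≤ 2 * √n := by
  have hn' : (1 : ℝ) < n := by exact_mod_cast hn
  have hK : 0 ≤ 2 * ballVol (n - 1) / ballVol n := by
    have := ballVol_pos (by omega : 1 ≤ n - 1)
    have := ballVol_pos (by omega : 1 ≤ n)
    positivity
  have h := mul_le_mul_of_nonneg_left (one_div_two_sqrt_le_integral_one_sub_sq_rpow hn') hK
  rw [ballVol_pred_div_mul_integral_eq_one hn, mul_one_div, div_le_one (by positivity)] at h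
  exact h

theorem one_sub_two_sqrt_div_le_capProb {n : ℕ} {r t : ℝ} (hn : 2 ≤ n) (ht₀ : 0 ≤ t)
    (ht₁ : t ≤ 1) (hr : 1 ≤ r) : 1 - 2 * √n / r ≤ capProb n r t := by
  have hc : 0 ≤ ((n : ℝ) - 1) / 2 := by
    have : (2 : ℝ) ≤ n := by exact_mod_cast hn
    linarith
  set c : ℝ := ((n : ℝ) - 1) / 2
  have hf := continuous_one_sub_sq_rpow hc
  set K := 2 * ballVol (n - 1) / ballVol n
  have hK : 0 ≤ K := by
    have := ballVol_pos (by omega : 1 ≤ n - 1)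
    have := ballVol_pos (by omega : 1 ≤ n)
    positivity
  have hr₀ : 0 < r := by linarith
  have htr₀ : 0 ≤ t / r := by positivity
  have htr₁ : t / r ≤ 1 / r := by gcongr
  have hcone : 0 ≤ t / (n * r) * (1 - t ^ 2 / r ^ 2) ^ c := by
    have : t ^ 2 / r ^ 2 ≤ 1 := by
      rw [div_le_one (by positivity)]
      nlinarith
    exact mul_nonneg (by positivity) (rpow_nonneg (by linarith) _)
  have hsplit := integral_add_adjacent_intervals (hf.intervalIntegrable (μ := volume) 0 (t / r))
    (hf.intervalIntegrable (t / r) 1)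
  have hhead := integral_one_sub_sq_rpow_le hc htr₀ (htr₁.trans (div_le_one_of_le₀ hr hr₀.le))
  have hnorm : K * ∫ s in (0 : ℝ)..1, (1 - s ^ 2) ^ c = 1 :=
    ballVol_pred_div_mul_integral_eq_one hn
  rw [capProb, if_neg (by linarith)]
  calc 1 - 2 * √n / r ≤ 1 - K * (t / r) := by
        have := mul_le_mul (ballVol_pred_div_le hn) htr₁ htr₀ (by positivity)
        rw [mul_one_div] at this
        linarith
    _ ≤ 1 - K * ∫ s in (0 : ℝ)..(t / r), (1 - s ^ 2) ^ c := by gcongr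
    _ ≤ _ := by
      rw [← hsplit, mul_add] at hnorm
      rw [mul_add]
      linarith [mul_nonneg hK hcone]

theorem tWidth_le_one {γ : ℝ} (hγ : 0 ≤ γ) (n N : ℕ) : tWidth γ n N ≤ 1 := by
  have hbase : 0 ≤ γ * n * ballVol n / (N * ballVol (n - 1)) := by
    have : 0 ≤ ballVol n := ENNReal.toReal_nonneg
    have : 0 ≤ ballVol (n - 1) := ENNReal.toReal_nonneg
    positivity
  rw [tWidth, sqrt_le_one]
  linarith [rpow_nonneg hbase (2 / ((n : ℝ) - 1))]

theorem statement15 (γ : ℝ) (hγ : 0 < γ) :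
    ∃ C : ℝ, 0 < C ∧ ∀ n N : ℕ, 2 ≤ n → n ^ n ≤ N →
      γ * n * ballVol n < N * ballVol (n - 1) →
      ∀ r : ℝ, (n : ℝ) ^ 2 ≤ r →
        1 - C * Real.sqrt n / r ≤ capProb n r (tWidth γ n N) := by
  refine ⟨2, two_pos, fun n N hn _ _ r hr => ?_⟩
  have hr₁ : 1 ≤ r := by
    have : (1 : ℝ) ≤ n := by exact_mod_cast (by omega : 1 ≤ n)
    nlinarith
  exact one_sub_two_sqrt_div_le_capProb hn (sqrt_nonneg _) (tWidth_le_one hγ.le n N) hr₁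
end
end

section
/- There exists an absolute constant C > 0 such that for every integer n ≥ 2 and every real a ∈ (2/3, 1): | ∫_a^1 (1 − x²)^{(n-1)/2} dx − (1 − a²)^{(n+1)/2} / (a·(n−1)) | ≤ (C/n) · ∫_a^1 (1 − x²)^{(n-1)/2} dx. -/
/-!
With `p = (n - 1) / 2`, the function `x ↦ -(1 - x²)^(p+1) / x` has derivative
`(2p + 2)(1 - x²)^p + (1 - x²)^(p+1) / x²`, so integrating over `[a, 1]` gives
`(n + 1) I + E = (1 - a²)^(p+1) / a`, where `I` is the integral in question and `E` that of
`(1 - x²)^(p+1) / x²`. Hence `I - (1 - a²)^(p+1) / (a (n - 1)) = -(2I + E) / (n - 1)`, and on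
`[a, 1]` the factor `(1 - x²) / x²` is at most `(1 - a²) / a² ≤ 5/4`, so `E ≤ 5/4 · I` and the
error is at most `13/4 · I / (n - 1) ≤ 13/2 · I / n`.
-/

open MeasureTheory Set

theorem hasDerivAt_neg_one_sub_sq_rpow_div {p x : ℝ} (hp : 0 ≤ p) (hx : x ≠ 0) :
    HasDerivAt (fun y : ℝ => -(1 - y ^ 2) ^ (p + 1) / y)
      ((2 * p + 2) * (1 - x ^ 2) ^ p + (1 - x ^ 2) ^ (p + 1) / x ^ 2) x := by
  have hbase : HasDerivAt (fun y : ℝ => 1 - y ^ 2) (-(2 * x)) x := by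
    simpa using (hasDerivAt_pow 2 x).const_sub 1
  have hpow := ((Real.hasDerivAt_rpow_const (p := p + 1) (Or.inr (by linarith))).comp x
    hbase).neg.div (hasDerivAt_id x) hx
  refine hpow.congr_deriv ?_
  have hsucc : (1 - x ^ 2) ^ (p + 1) = (1 - x ^ 2) ^ p * (1 - x ^ 2) := by
    rcases eq_or_ne (1 - x ^ 2) 0 with h | h
    · rw [h, Real.zero_rpow (by linarith), mul_zero]
    · exact Real.rpow_add_one h p
  simp only [Pi.neg_apply, Function.comp_apply, id_eq, add_sub_cancel_right]
  rw [hsucc]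
  field_simp
  ring

theorem one_sub_sq_nonneg_of_mem_Icc {a x : ℝ} (ha : 0 ≤ a) (hx : x ∈ Icc a 1) :
    0 ≤ 1 - x ^ 2 := by
  nlinarith [hx.2, ha.trans hx.1]

theorem integral_one_sub_sq_rpow_nonneg {p a : ℝ} (ha : 0 ≤ a) (ha1 : a ≤ 1) :
    0 ≤ ∫ x in a..1, (1 - x ^ 2) ^ p :=
  intervalIntegral.integral_nonneg ha1 fun _ hx =>
    Real.rpow_nonneg (one_sub_sq_nonneg_of_mem_Icc ha hx) p

theorem intervalIntegrable_one_sub_sq_rpow {p : ℝ} (hp : 0 ≤ p) (a b : ℝ) :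
    IntervalIntegrable (fun x : ℝ => (1 - x ^ 2) ^ p) volume a b :=
  ((Real.continuous_rpow_const hp).comp (continuous_const.sub (continuous_pow 2))).intervalIntegrable
    a b

theorem intervalIntegrable_one_sub_sq_rpow_div_sq {p a b : ℝ} (hp : 0 ≤ p) (ha : 0 < a)
    (hb : 0 < b) :
    IntervalIntegrable (fun x : ℝ => (1 - x ^ 2) ^ p / x ^ 2) volume a b := by
  refine ContinuousOn.intervalIntegrable ?_
  refine ((Real.continuous_rpow_const hp).comp
    (continuous_const.sub (continuous_pow 2))).continuousOn.div (continuous_pow 2).continuousOn ?_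
  intro x hx
  have : 0 < x := lt_of_lt_of_le (lt_min ha hb) hx.1
  positivity

theorem integral_one_sub_sq_rpow_identity {p a : ℝ} (hp : 0 ≤ p) (ha : 0 < a) :
    (2 * p + 2) * (∫ x in a..1, (1 - x ^ 2) ^ p) + ∫ x in a..1, (1 - x ^ 2) ^ (p + 1) / x ^ 2 =
      (1 - a ^ 2) ^ (p + 1) / a := by
  have hderiv : ∀ x ∈ uIcc a 1, HasDerivAt (fun y : ℝ => -(1 - y ^ 2) ^ (p + 1) / y)
      ((2 * p + 2) * (1 - x ^ 2) ^ p + (1 - x ^ 2) ^ (p + 1) / x ^ 2) x := fun x hx =>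
    hasDerivAt_neg_one_sub_sq_rpow_div hp (lt_of_lt_of_le (lt_min ha one_pos) hx.1).ne'
  have hI := intervalIntegrable_one_sub_sq_rpow hp a 1
  have hE := intervalIntegrable_one_sub_sq_rpow_div_sq (p := p + 1) (by linarith) ha one_pos
  rw [← intervalIntegral.integral_const_mul, ← intervalIntegral.integral_add (hI.const_mul _) hE,
    intervalIntegral.integral_eq_sub_of_hasDerivAt hderiv ((hI.const_mul _).add hE)]
  norm_num [Real.zero_rpow (by linarith : p + 1 ≠ 0), neg_div]

theorem integral_one_sub_sq_rpow_div_sq_le {p a : ℝ} (hp : 0 ≤ p) (ha : 0 < a) (ha1 : a ≤ 1) :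
    ∫ x in a..1, (1 - x ^ 2) ^ (p + 1) / x ^ 2 ≤
      (1 - a ^ 2) / a ^ 2 * ∫ x in a..1, (1 - x ^ 2) ^ p := by
  rw [← intervalIntegral.integral_const_mul]
  refine intervalIntegral.integral_mono_on ha1
    (intervalIntegrable_one_sub_sq_rpow_div_sq (by linarith) ha one_pos)
    ((intervalIntegrable_one_sub_sq_rpow hp a 1).const_mul _) fun x hx => ?_
  have hx0 : 0 < x := ha.trans_le hx.1
  have hbase : 0 ≤ 1 - x ^ 2 := one_sub_sq_nonneg_of_mem_Icc ha.le hx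
  have hratio : (1 - x ^ 2) / x ^ 2 ≤ (1 - a ^ 2) / a ^ 2 := by
    rw [div_le_div_iff₀ (by positivity) (by positivity)]
    nlinarith [mul_le_mul hx.1 hx.1 ha.le hx0.le]
  calc (1 - x ^ 2) ^ (p + 1) / x ^ 2 = (1 - x ^ 2) / x ^ 2 * (1 - x ^ 2) ^ p := by
        rw [Real.rpow_add_one' hbase (by linarith)]; ring
    _ ≤ (1 - a ^ 2) / a ^ 2 * (1 - x ^ 2) ^ p :=
        mul_le_mul_of_nonneg_right hratio (Real.rpow_nonneg hbase p)

theorem abs_integral_one_sub_sq_rpow_sub_le {p a : ℝ} (hp : 0 < p) (ha : 0 < a) (ha1 : a ≤ 1) :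
    |(∫ x in a..1, (1 - x ^ 2) ^ p) - (1 - a ^ 2) ^ (p + 1) / (a * (2 * p))| ≤
      (2 + (1 - a ^ 2) / a ^ 2) / (2 * p) * ∫ x in a..1, (1 - x ^ 2) ^ p := by
  set I := ∫ x in a..1, (1 - x ^ 2) ^ p
  set E := ∫ x in a..1, (1 - x ^ 2) ^ (p + 1) / x ^ 2
  have hI0 : 0 ≤ I := integral_one_sub_sq_rpow_nonneg ha.le ha1
  have hE0 : 0 ≤ E := intervalIntegral.integral_nonneg ha1 fun _ hx =>
    div_nonneg (Real.rpow_nonneg (one_sub_sq_nonneg_of_mem_Icc ha.le hx) _) (sq_nonneg _)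
  have hdiff : I - (1 - a ^ 2) ^ (p + 1) / (a * (2 * p)) = -((2 * I + E) / (2 * p)) := by
    rw [← div_div, ← integral_one_sub_sq_rpow_identity hp.le ha]
    field_simp
    ring
  have hEI : E ≤ (1 - a ^ 2) / a ^ 2 * I := integral_one_sub_sq_rpow_div_sq_le hp.le ha ha1
  rw [hdiff, abs_neg, abs_of_nonneg (by positivity), div_mul_eq_mul_div]
  gcongr
  linarith

theorem statement17 :
    ∃ C : ℝ, 0 < C ∧ ∀ n : ℕ, 2 ≤ n → ∀ a : ℝ, a ∈ Set.Ioo (2/3 : ℝ) 1 →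
      |(∫ x in a..1, (1 - x ^ 2) ^ (((n : ℝ) - 1) / 2)) -
          (1 - a ^ 2) ^ (((n : ℝ) + 1) / 2) / (a * ((n : ℝ) - 1))| ≤
        C / n * ∫ x in a..1, (1 - x ^ 2) ^ (((n : ℝ) - 1) / 2) := by
  refine ⟨13 / 2, by norm_num, fun n hn a ⟨ha, ha1⟩ => ?_⟩
  have hn : (2 : ℝ) ≤ n := by exact_mod_cast hn
  have hp : 0 < ((n : ℝ) - 1) / 2 := by linarith
  have hratio : (1 - a ^ 2) / a ^ 2 ≤ 5 / 4 := by
    rw [div_le_iff₀ (by positivity)]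
    nlinarith
  have hbound := abs_integral_one_sub_sq_rpow_sub_le hp (by linarith) ha1.le
  rw [show ((n : ℝ) - 1) / 2 + 1 = ((n : ℝ) + 1) / 2 by ring,
    show 2 * (((n : ℝ) - 1) / 2) = (n : ℝ) - 1 by ring] at hbound
  refine hbound.trans
    (mul_le_mul_of_nonneg_right ?_ (integral_one_sub_sq_rpow_nonneg (by linarith) ha1.le))
  rw [div_le_div_iff₀ (by linarith) (by linarith)]
  nlinarith
end
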